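/- Fix β > 0 and K > 0, define f(z) = c_β(2βK z)/(2βK) for z ∈ ℝ, and let f*(z) = sup_{x∈ℝ} {x z − f(x)} ∈ (−∞, +∞] be its Legendre–Fenchel transform (f* is finite exactly on [−1,1]). Then: (1) sup_{z∈ℝ} {f(z) − z²/2} = sup_{z∈[−1,1]} {z²/2 − f*(z)}; (2) both suprema are attained, the first at some point of ℝ and the second at some point of the open interval (−1,1); (3) the set of global maximum points of z ↦ f(z) − z²/2 over ℝ coincides with the set of global maximum points of z ↦ z²/2 − f*(z) over [−1,1]. -/

import Mathlib

noncomputable section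

/-- `c_β(t) = log[(1 + e^{−β}(e^t + e^{−t}))/(1 + 2e^{−β})]`. -/
def cBeta (β t : ℝ) : ℝ :=
  Real.log ((1 + Real.exp (-β) * (Real.exp t + Real.exp (-t))) / (1 + 2 * Real.exp (-β)))

/-! Let `h z = f z - z²/2` and `φ z = z²/2 - f* z`. At a global maximiser `z` of `h` we have
`f' z = z`, so `z ∈ (-1, 1)` because `|f'| < 1`, and by convexity the supremum defining `f* z` is
attained at `x = z`, whence `φ z = h z`. On `[-1, 1]`, where `f x ≥ |x| - C` makes `f*` finite,
Fenchel–Young gives `φ ≤ h`. These two facts squeeze the suprema and the sets of maximisers of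
`h` and `φ` together. A maximiser of `h` exists because `f` is `1`-Lipschitz, so that
`h z → -∞` as `|z| → ∞`. -/

open Set Real

theorem IsMaxOn.iSup_univ_eq {ι α : Type*} [ConditionallyCompleteLinearOrder α] {g : ι → α}
    {i : ι} (h : IsMaxOn g univ i) : ⨆ j, g j = g i :=
  haveI : Nonempty ι := ⟨i⟩
  ciSup_eq_of_forall_le_of_forall_lt_exists_gt (fun j => h (mem_univ j)) fun _ hw => ⟨i, hw⟩

/-- The Legendre–Fenchel transform, with the junk value `0` wherever the supremum is infinite. -/
def legendre (f : ℝ → ℝ) (z : ℝ) : ℝ := ⨆ x, x * z - f x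

section Legendre

variable {f : ℝ → ℝ}

theorem bddAbove_range_mul_sub_of_abs_sub_le {C z : ℝ} (hC : ∀ x, |x| - C ≤ f x)
    (hz : |z| ≤ 1) : BddAbove (range fun x => x * z - f x) := by
  refine ⟨C, forall_mem_range.2 fun x => ?_⟩
  have : x * z ≤ |x| :=
    calc x * z ≤ |x * z| := le_abs_self _
      _ = |x| * |z| := abs_mul x z
      _ ≤ |x| := mul_le_of_le_one_right (abs_nonneg x) hz
  linarith [hC x]

theorem sq_sub_le_legendre {C z : ℝ} (hC : ∀ x, |x| - C ≤ f x) (hz : |z| ≤ 1) :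
    z ^ 2 - f z ≤ legendre f z :=
  (sq z).symm ▸ le_ciSup (bddAbove_range_mul_sub_of_abs_sub_le hC hz) z

theorem ConvexOn.legendre_eq_of_hasDerivAt {d z : ℝ} (hf : ConvexOn ℝ univ f)
    (hd : HasDerivAt f d z) : legendre f d = z * d - f z := by
  have hconv : ConvexOn ℝ univ (fun x => f x - x * d) :=
    hf.sub ((LinearMap.mulRight ℝ d).concaveOn convex_univ)
  -- the tangent line of the convex `f` at `z` lies below its graph
  have hmin : IsMinOn (fun x => f x - x * d) univ z := by
    refine hconv.isMinOn_of_rightDeriv_eq_zero (by simp) ?_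
    exact ((hd.sub (hasDerivAt_mul_const d)).hasDerivWithinAt.derivWithin
      (uniqueDiffWithinAt_Ioi z)).trans (by ring)
  refine IsMaxOn.iSup_univ_eq (isMaxOn_iff.2 fun x _ => ?_)
  linarith [isMinOn_iff.1 hmin x (mem_univ x)]

theorem exists_isMaxOn_sub_sq_half (hf : LipschitzWith 1 f) :
    ∃ z, IsMaxOn (fun z => f z - z ^ 2 / 2) univ z := by
  have hfar : ∀ᶠ x in Filter.cocompact ℝ, f x - x ^ 2 / 2 ≤ f 0 - 0 ^ 2 / 2 := by
    filter_upwards [(isCompact_closedBall (0 : ℝ) 2).compl_mem_cocompact] with x hx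
    have hx2 : 2 < |x| := by simpa [Real.dist_eq] using hx
    have hlip : f x ≤ f 0 + |x| := by
      have := hf.dist_le_mul x 0
      rw [Real.dist_eq, Real.dist_eq, sub_zero, NNReal.coe_one, one_mul] at this
      linarith [le_abs_self (f x - f 0)]
    nlinarith [sq_abs x]
  obtain ⟨z, hz⟩ := hf.continuous.sub (by fun_prop) |>.exists_forall_ge' 0 hfar
  exact ⟨z, fun x _ => hz x⟩

theorem deriv_eq_of_isMaxOn_sub_sq_half {z : ℝ} (hd : DifferentiableAt ℝ f z)
    (hz : IsMaxOn (fun z => f z - z ^ 2 / 2) univ z) : deriv f z = z := by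
  have := (hz.isLocalMax Filter.univ_mem).hasDerivAt_eq_zero
    (hd.hasDerivAt.sub ((hasDerivAt_pow 2 z).div_const 2))
  simp only [Nat.cast_ofNat] at this
  linarith

theorem mem_Ioo_and_sq_half_sub_legendre_eq_of_isMaxOn {z : ℝ} (hdiff : Differentiable ℝ f)
    (hconv : ConvexOn ℝ univ f) (hderiv : ∀ x, |deriv f x| < 1)
    (hz : IsMaxOn (fun z => f z - z ^ 2 / 2) univ z) :
    z ∈ Ioo (-1) 1 ∧ z ^ 2 / 2 - legendre f z = f z - z ^ 2 / 2 := by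
  have hcrit := deriv_eq_of_isMaxOn_sub_sq_half (hdiff z) hz
  refine ⟨abs_lt.1 (hcrit ▸ hderiv z), ?_⟩
  rw [hconv.legendre_eq_of_hasDerivAt (hcrit ▸ (hdiff z).hasDerivAt)]
  ring

theorem sup_sub_sq_half_eq_sup_sq_half_sub_legendre {C : ℝ} (hdiff : Differentiable ℝ f)
    (hconv : ConvexOn ℝ univ f) (hderiv : ∀ x, |deriv f x| < 1) (hC : ∀ x, |x| - C ≤ f x) :
    ((⨆ z : ℝ, (f z - z ^ 2 / 2)) =
        ⨆ z : Icc (-1 : ℝ) 1, ((z : ℝ) ^ 2 / 2 - legendre f z)) ∧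
    (∃ z : ℝ, IsMaxOn (fun z => f z - z ^ 2 / 2) univ z) ∧
    (∃ z ∈ Ioo (-1 : ℝ) 1, IsMaxOn (fun z => z ^ 2 / 2 - legendre f z) (Icc (-1 : ℝ) 1) z) ∧
    {z : ℝ | IsMaxOn (fun z => f z - z ^ 2 / 2) univ z} =
      {z : ℝ | z ∈ Icc (-1 : ℝ) 1 ∧
        IsMaxOn (fun z => z ^ 2 / 2 - legendre f z) (Icc (-1 : ℝ) 1) z} := by
  have hlip : LipschitzWith 1 f := lipschitzWith_of_nnnorm_deriv_le hdiff fun x => by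
    rw [← NNReal.coe_le_coe, coe_nnnorm, Real.norm_eq_abs, NNReal.coe_one]
    exact (hderiv x).le
  have hle : ∀ w ∈ Icc (-1 : ℝ) 1, w ^ 2 / 2 - legendre f w ≤ f w - w ^ 2 / 2 := fun w hw => by
    linarith [sq_sub_le_legendre hC (abs_le.2 hw)]
  obtain ⟨z₀, hz₀⟩ := exists_isMaxOn_sub_sq_half hlip
  obtain ⟨hz₀I, hz₀eq⟩ := mem_Ioo_and_sq_half_sub_legendre_eq_of_isMaxOn hdiff hconv hderiv hz₀
  have hz₀' : IsMaxOn (fun z => z ^ 2 / 2 - legendre f z) (Icc (-1 : ℝ) 1) z₀ :=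
    isMaxOn_iff.2 fun w hw => hz₀eq ▸ (hle w hw).trans (isMaxOn_iff.1 hz₀ w (mem_univ w))
  refine ⟨?_, ⟨z₀, hz₀⟩, ⟨z₀, hz₀I, hz₀'⟩, ?_⟩
  · rw [hz₀.iSup_univ_eq, hz₀'.iSup_eq (Ioo_subset_Icc_self hz₀I), hz₀eq]
  ext z
  constructor
  · intro hz
    obtain ⟨hzI, hzeq⟩ := mem_Ioo_and_sq_half_sub_legendre_eq_of_isMaxOn hdiff hconv hderiv hz
    exact ⟨Ioo_subset_Icc_self hzI,
      isMaxOn_iff.2 fun w hw => hzeq ▸ (hle w hw).trans (isMaxOn_iff.1 hz w (mem_univ w))⟩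
  · rintro ⟨hzI, hz⟩ w -
    calc f w - w ^ 2 / 2 ≤ f z₀ - z₀ ^ 2 / 2 := hz₀ (mem_univ w)
      _ = z₀ ^ 2 / 2 - legendre f z₀ := hz₀eq.symm
      _ ≤ z ^ 2 / 2 - legendre f z := hz (Ioo_subset_Icc_self hz₀I)
      _ ≤ f z - z ^ 2 / 2 := hle z hzI

end Legendre

section CBeta

variable (β : ℝ)

theorem hasDerivAt_cBeta (t : ℝ) :
    HasDerivAt (cBeta β)
      (exp (-β) * (exp t - exp (-t)) / (1 + exp (-β) * (exp t + exp (-t)))) t := by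
  have hN : HasDerivAt (fun u => 1 + exp (-β) * (exp u + exp (-u)))
      (exp (-β) * (exp t - exp (-t))) t := by
    have hneg : HasDerivAt (fun u => exp (-u)) (-exp (-t)) t := by
      simpa using (hasDerivAt_neg t).exp
    simpa [sub_eq_add_neg] using (((hasDerivAt_exp t).add hneg).const_mul (exp (-β))).const_add 1
  have hsplit : cBeta β = fun u => log (1 + exp (-β) * (exp u + exp (-u)))
      - log (1 + 2 * exp (-β)) :=
    funext fun u => log_div (by positivity) (by positivity)
  rw [hsplit]
  exact (hN.log (by positivity)).sub_const _

theorem deriv_cBeta : deriv (cBeta β) =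
    fun t => exp (-β) * (exp t - exp (-t)) / (1 + exp (-β) * (exp t + exp (-t))) :=
  funext fun t => (hasDerivAt_cBeta β t).deriv

theorem differentiable_cBeta : Differentiable ℝ (cBeta β) :=
  fun t => (hasDerivAt_cBeta β t).differentiableAt

theorem abs_deriv_cBeta_lt_one (t : ℝ) : |deriv (cBeta β) t| < 1 := by
  have hN : 0 < 1 + exp (-β) * (exp t + exp (-t)) := by positivity
  rw [deriv_cBeta, abs_div, abs_of_pos hN, div_lt_one hN, abs_mul, abs_of_pos (exp_pos _)]
  have : |exp t - exp (-t)| ≤ exp t + exp (-t) := by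
    rw [abs_sub_le_iff]; constructor <;> linarith [exp_pos t, exp_pos (-t)]
  nlinarith [exp_pos (-β)]

theorem monotone_deriv_cBeta : Monotone (deriv (cBeta β)) := by
  intro s t h
  have hNs : 0 < 1 + exp (-β) * (exp s + exp (-s)) := by positivity
  have hNt : 0 < 1 + exp (-β) * (exp t + exp (-t)) := by positivity
  rw [deriv_cBeta, div_le_div_iff₀ hNs hNt]
  have h1 : exp s ≤ exp t := exp_le_exp.2 h
  have h2 : exp (-t) ≤ exp (-s) := exp_le_exp.2 (neg_le_neg h)
  have h3 : exp s * exp (-t) ≤ exp t * exp (-s) := mul_le_mul h1 h2 (exp_pos _).le (exp_pos _).le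
  have hb := exp_pos (-β)
  nlinarith [mul_le_mul_of_nonneg_left h1 hb.le, mul_le_mul_of_nonneg_left h2 hb.le,
    mul_le_mul_of_nonneg_left h3 (mul_nonneg hb.le hb.le)]

theorem abs_sub_le_cBeta (t : ℝ) : |t| - (β + log (1 + 2 * exp (-β))) ≤ cBeta β t := by
  have hN : 0 < 1 + exp (-β) * (exp t + exp (-t)) := by positivity
  have hexp : exp |t| ≤ exp t + exp (-t) := by
    rcases abs_cases t with ⟨h, _⟩ | ⟨h, _⟩ <;> rw [h] <;> linarith [exp_pos t, exp_pos (-t)]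
  have hlog : |t| - β ≤ log (1 + exp (-β) * (exp t + exp (-t))) := by
    rw [le_log_iff_exp_le hN, sub_eq_neg_add, exp_add]
    nlinarith [exp_pos (-β)]
  rw [cBeta, log_div hN.ne' (by positivity)]
  linarith

end CBeta

theorem HasDerivAt.comp_mul_div {g : ℝ → ℝ} {g' a z : ℝ} (hg : HasDerivAt g g' (a * z))
    (ha : a ≠ 0) : HasDerivAt (fun z => g (a * z) / a) g' z := by
  have := (hg.comp z ((hasDerivAt_id z).const_mul a)).div_const a
  rwa [mul_one, mul_div_cancel_right₀ g' ha] at this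

/-- With `f(z) = c_β(2βKz)/(2βK)` and `f*` its Legendre–Fenchel
transform (real-valued on `[-1,1]`, where alone it is used): (1) the two suprema
`sup_{z∈ℝ} {f(z) − z²/2}` and `sup_{z∈[-1,1]} {z²/2 − f*(z)}` are equal; (2) both are
attained, the first on `ℝ`, the second at a point of the open interval `(-1,1)`;
(3) the two sets of global maximum points coincide. -/
theorem sup_f_eq_sup_fstar (β K : ℝ) (hβ : 0 < β) (hK : 0 < K) :
    let f : ℝ → ℝ := fun z => cBeta β (2 * β * K * z) / (2 * β * K)
    let fstar : ℝ → ℝ := fun z => ⨆ x : ℝ, (x * z - f x)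
    ((⨆ z : ℝ, (f z - z ^ 2 / 2)) =
        ⨆ z : Set.Icc (-1 : ℝ) 1, ((z : ℝ) ^ 2 / 2 - fstar z)) ∧
    (∃ z : ℝ, IsMaxOn (fun z => f z - z ^ 2 / 2) Set.univ z) ∧
    (∃ z ∈ Set.Ioo (-1 : ℝ) 1,
      IsMaxOn (fun z => z ^ 2 / 2 - fstar z) (Set.Icc (-1 : ℝ) 1) z) ∧
    {z : ℝ | IsMaxOn (fun z => f z - z ^ 2 / 2) Set.univ z} =
      {z : ℝ | z ∈ Set.Icc (-1 : ℝ) 1 ∧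
        IsMaxOn (fun z => z ^ 2 / 2 - fstar z) (Set.Icc (-1 : ℝ) 1) z} := by
  intro f fstar
  have ha : 0 < 2 * β * K := by positivity
  have hf' : ∀ z, HasDerivAt f (deriv (cBeta β) (2 * β * K * z)) z := fun z =>
    (differentiable_cBeta β _).hasDerivAt.comp_mul_div ha.ne'
  have hderiv : deriv f = fun z => deriv (cBeta β) (2 * β * K * z) :=
    funext fun z => (hf' z).deriv
  have hdiff : Differentiable ℝ f := fun z => (hf' z).differentiableAt
  refine sup_sub_sq_half_eq_sup_sq_half_sub_legendre
    (C := (β + log (1 + 2 * exp (-β))) / (2 * β * K)) hdiff ?_ (fun z => hderiv ▸ abs_deriv_cBeta_lt_one β _) fun z => ?_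
  · refine Monotone.convexOn_univ_of_deriv hdiff ?_
    rw [hderiv]
    exact (monotone_deriv_cBeta β).comp fun s t hst => mul_le_mul_of_nonneg_left hst ha.le
  · have := abs_sub_le_cBeta β (2 * β * K * z)
    rw [abs_mul, abs_of_pos ha] at this
    show _ ≤ cBeta β (2 * β * K * z) / (2 * β * K)
    rw [le_div_iff₀ ha, sub_mul, div_mul_cancel₀ _ ha.ne']
    linarith
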